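/- arXiv:1905.10682 — 2 statements merged into one kernel-verified Lean document; each statement's English description precedes it below -/
import Mathlib

section
/- Let H be a square-free graph, W = γ₀ γ₁ ⋯ γ_k an nc-walk in H with k ≥ 1, and K the gadget path s v₁ ⋯ v_{k-1} t with pendant u_i pinned to γ_i. Then for any ω_t ∈ N(γ_k) \ {γ_{k-1}}, there is exactly one homomorphism σ : K → H with σ(u_i) = γ_i for all i, σ(s) = γ₁, and σ(t) = ω_t. -/
/-!
In a square-free graph two distinct vertices have at most one common neighbour.  The image of
`v_i` is a common neighbour of `γ_i` (the image of `u_i`) and of the image of `v_{i+1}`, so going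
down from `σ(t) = ω_t` the images are forced to be `γ_k, γ_{k-1}, …, γ_1`; the two endpoints
differ at each step precisely because `W` is an nc-walk and `ω_t ≠ γ_{k-1}`.  Conversely the
shifted walk `γ_1 γ_2 ⋯ γ_k ω_t` is such a homomorphism.
-/

theorem SimpleGraph.commonNeighbors_subsingleton {V : Type*} {H : SimpleGraph V}
    (hsf : ∀ a b c d : V, a ≠ b → b ≠ c → c ≠ d → d ≠ a → a ≠ c → b ≠ d →
      ¬(H.Adj a b ∧ H.Adj b c ∧ H.Adj c d ∧ H.Adj d a))
    {a c : V} (hac : a ≠ c) : (H.commonNeighbors a c).Subsingleton := by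
  rintro b ⟨hab, hcb⟩ d ⟨had, hcd⟩
  by_contra hbd
  exact hsf a b c d hab.ne hcb.ne.symm hcd.ne had.ne.symm hac hbd ⟨hab, hcb.symm, hcd, had.symm⟩

namespace PathGadget

variable {V : Type*} {H : SimpleGraph V} {k : ℕ} {γ : ℕ → V} {ωt : V}

/-- Vertex `i` of `Fin (k + 1)` stands for `s` (`i = 0`), `v_i` or `t` (`i = k`); the pendant
`u_i`, being pinned to `γ_i`, only contributes the constraint `σ(v_i) ~ γ_i`. -/
def IsPinnedHom (H : SimpleGraph V) (k : ℕ) (γ : ℕ → V) (ωt : V) (σ : Fin (k + 1) → V) :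
    Prop :=
  (∀ i : ℕ, (h : i < k) →
      H.Adj (σ ⟨i, Nat.lt_succ_of_lt h⟩) (σ ⟨i + 1, Nat.succ_lt_succ h⟩)) ∧
    (∀ i : ℕ, 1 ≤ i → (h : i + 1 ≤ k) → H.Adj (σ ⟨i, Nat.lt_succ_of_lt h⟩) (γ i)) ∧
    σ 0 = γ 1 ∧ σ (Fin.last k) = ωt

def shiftedWalk (k : ℕ) (γ : ℕ → V) (ωt : V) (n : ℕ) : V :=
  if n = k then ωt else γ (n + 1)

@[simp]
theorem shiftedWalk_self : shiftedWalk k γ ωt k = ωt :=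
  if_pos rfl

theorem shiftedWalk_of_ne {n : ℕ} (h : n ≠ k) : shiftedWalk k γ ωt n = γ (n + 1) :=
  if_neg h

theorem adj_shiftedWalk_succ (hwalk : ∀ i < k, H.Adj (γ i) (γ (i + 1)))
    (hωt : H.Adj (γ k) ωt) {i : ℕ} (hi : i < k) :
    H.Adj (shiftedWalk k γ ωt i) (shiftedWalk k γ ωt (i + 1)) := by
  rw [shiftedWalk_of_ne hi.ne]
  rcases (Nat.succ_le_of_lt hi).eq_or_lt with rfl | hlt
  · simpa using hωt
  · rw [shiftedWalk_of_ne hlt.ne]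
    exact hwalk (i + 1) hlt

theorem ne_shiftedWalk_succ (hnc : ∀ i, 1 ≤ i → i + 1 ≤ k → γ (i - 1) ≠ γ (i + 1))
    (hωt1 : ωt ≠ γ (k - 1)) {i : ℕ} (hi : i < k) : γ i ≠ shiftedWalk k γ ωt (i + 1) := by
  rcases (Nat.succ_le_of_lt hi).eq_or_lt with rfl | hlt
  · simpa using hωt1.symm
  · rw [shiftedWalk_of_ne hlt.ne]
    simpa using hnc (i + 1) (by omega) hlt

theorem isPinnedHom_shiftedWalk (hk : 1 ≤ k) (hwalk : ∀ i < k, H.Adj (γ i) (γ (i + 1)))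
    (hωt : H.Adj (γ k) ωt) : IsPinnedHom H k γ ωt fun i => shiftedWalk k γ ωt i := by
  refine ⟨fun i hi => adj_shiftedWalk_succ hwalk hωt hi, fun i _ hi => ?_, ?_, shiftedWalk_self⟩
  · change H.Adj (shiftedWalk k γ ωt i) (γ i)
    rw [shiftedWalk_of_ne (by omega)]
    exact (hwalk i (by omega)).symm
  · exact shiftedWalk_of_ne (by simp; omega)

theorem IsPinnedHom.eq_shiftedWalk
    (hsf : ∀ a b c d : V, a ≠ b → b ≠ c → c ≠ d → d ≠ a → a ≠ c → b ≠ d →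
      ¬(H.Adj a b ∧ H.Adj b c ∧ H.Adj c d ∧ H.Adj d a))
    (hwalk : ∀ i < k, H.Adj (γ i) (γ (i + 1)))
    (hnc : ∀ i, 1 ≤ i → i + 1 ≤ k → γ (i - 1) ≠ γ (i + 1))
    (hωt : H.Adj (γ k) ωt) (hωt1 : ωt ≠ γ (k - 1))
    {σ : Fin (k + 1) → V} (hσ : IsPinnedHom H k γ ωt σ) (i : Fin (k + 1)) :
    σ i = shiftedWalk k γ ωt i := by
  obtain ⟨hpath, hpend, hs, ht⟩ := hσ
  suffices ∀ j i, (hij : i + j = k) → σ ⟨i, by omega⟩ = shiftedWalk k γ ωt i from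
    this (k - i) i (by omega)
  intro j
  induction j with
  | zero =>
    intro i (hi : i = k)
    subst hi
    rw [shiftedWalk_self]
    exact ht
  | succ j ih =>
    intro i hij
    rcases Nat.eq_zero_or_pos i with rfl | hi
    · rw [shiftedWalk_of_ne (by omega)]
      exact hs
    · have hnext : σ ⟨i + 1, by omega⟩ = shiftedWalk k γ ωt (i + 1) := ih (i + 1) (by omega)
      refine H.commonNeighbors_subsingleton hsf (ne_shiftedWalk_succ hnc hωt1 (by omega))
        ⟨(hpend i hi (by omega)).symm, hnext ▸ (hpath i (by omega)).symm⟩ ⟨?_, ?_⟩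
      · rw [shiftedWalk_of_ne (by omega)]
        exact hwalk i (by omega)
      · exact (adj_shiftedWalk_succ hwalk hωt (by omega)).symm

end PathGadget

open PathGadget in
/-- For the path gadget on an nc-walk `γ₀ … γ_k` in a square-free graph and any
`ω_t ∈ N(γ_k) \ {γ_{k-1}}`, there is exactly one homomorphism with `σ(s) = γ₁` and
`σ(t) = ω_t`. -/
theorem stmt7 {V : Type*}
    (H : SimpleGraph V)
    (hsf : ∀ a b c d : V, a ≠ b → b ≠ c → c ≠ d → d ≠ a → a ≠ c → b ≠ d →
      ¬(H.Adj a b ∧ H.Adj b c ∧ H.Adj c d ∧ H.Adj d a))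
    (k : ℕ) (hk : 1 ≤ k)
    (γ : ℕ → V)
    (hwalk : ∀ i < k, H.Adj (γ i) (γ (i + 1)))
    (hnc : ∀ i, 1 ≤ i → i + 1 ≤ k → γ (i - 1) ≠ γ (i + 1))
    (ωt : V) (hωt : H.Adj (γ k) ωt) (hωt1 : ωt ≠ γ (k - 1)) :
    ∃! σ : Fin (k + 1) → V,
      (∀ i : ℕ, (h : i < k) →
        H.Adj (σ ⟨i, by omega⟩) (σ ⟨i + 1, by omega⟩)) ∧
      (∀ i : ℕ, 1 ≤ i → (h : i + 1 ≤ k) → H.Adj (σ ⟨i, by omega⟩) (γ i)) ∧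
      σ 0 = γ 1 ∧ σ ⟨k, by omega⟩ = ωt :=
  ⟨fun i => shiftedWalk k γ ωt i, isPinnedHom_shiftedWalk hk hwalk hωt,
    fun _ hσ => funext (IsPinnedHom.eq_shiftedWalk hsf hwalk hnc hωt hωt1 hσ)⟩
end

section
/- Let H be a square-free graph and C = θ γ₁ ⋯ γ_k θ a cycle of length at least 3 in H, and let K be the gadget path s v₁ ⋯ v_k t with pendants u_i pinned to γ_i (i ∈ [k]). Then for any ω_s ∈ N(θ) \ {γ₁} and ω_t ∈ N(θ) \ {γ_k}, there is no homomorphism σ : K → H with σ(u_i) = γ_i for all i, σ(s) = ω_s, and σ(t) = ω_t. -/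
/-!
Square-freeness forces every closed walk `a b c d a` of length four to be degenerate
(`a = c` or `b = d`). Along the gadget, the squares `σ i, γ i, γ (i+1), σ (i+1)` then show
that once `σ 1 = θ` (forced at `s` since `ω_s ≠ γ₁`), `σ` lags one step behind the cycle:
`σ (i+1) = γ i`. At the other end this gives `σ k = γ (k-1)`, while the square at `t`
forces `σ k = θ = γ 0`, contradicting `k ≥ 2` and the distinctness of the cycle vertices.
-/

namespace SimpleGraph

variable {V : Type*} {H : SimpleGraph V}

def SquareFree (H : SimpleGraph V) : Prop :=
  ∀ a b c d : V, a ≠ b → b ≠ c → c ≠ d → d ≠ a → a ≠ c → b ≠ d →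
    ¬(H.Adj a b ∧ H.Adj b c ∧ H.Adj c d ∧ H.Adj d a)

namespace SquareFree

theorem eq_or_eq (hH : H.SquareFree) {a b c d : V} (hab : H.Adj a b) (hbc : H.Adj b c)
    (hcd : H.Adj c d) (hda : H.Adj d a) : a = c ∨ b = d := by
  by_contra! h
  exact hH a b c d hab.ne hbc.ne hcd.ne hda.ne h.1 h.2 ⟨hab, hbc, hcd, hda⟩

theorem eq_of_ne (hH : H.SquareFree) {a b c d : V} (hab : H.Adj a b) (hbc : H.Adj b c)
    (hcd : H.Adj c d) (hda : H.Adj d a) (hac : a ≠ c) : b = d :=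
  (hH.eq_or_eq hab hbc hcd hda).resolve_left hac

theorem lag_of_pinned_walk (hH : H.SquareFree) {k : ℕ} {γ σ : ℕ → V}
    (hγ : ∀ i < k, H.Adj (γ i) (γ (i + 1))) (hγ2 : ∀ i, i + 2 ≤ k → γ i ≠ γ (i + 2))
    (hσ : ∀ i < k, H.Adj (σ i) (σ (i + 1)))
    (hpin : ∀ i, 1 ≤ i → i ≤ k → H.Adj (σ i) (γ i)) (h1 : σ 1 = γ 0) :
    ∀ i, i + 1 ≤ k → σ (i + 1) = γ i := by
  intro i
  induction i with
  | zero => exact fun _ => h1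
  | succ n ih =>
    intro hn
    have hprev : σ (n + 1) = γ n := ih (by omega)
    refine (hH.eq_of_ne (hpin (n + 1) (by omega) (by omega)) (hγ (n + 1) (by omega))
      (hpin (n + 2) (by omega) hn).symm (hσ (n + 1) (by omega)).symm ?_).symm
    rw [hprev]
    exact hγ2 n hn

end SquareFree

end SimpleGraph


theorem stmt17_general {V : Type*}
    (H : SimpleGraph V)
    (hsf : ∀ a b c d : V, a ≠ b → b ≠ c → c ≠ d → d ≠ a → a ≠ c → b ≠ d →
      ¬(H.Adj a b ∧ H.Adj b c ∧ H.Adj c d ∧ H.Adj d a))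
    (k : ℕ) (hk : 2 ≤ k)
    (γ : ℕ → V)
    (hdist : ∀ i j, i ≤ k → j ≤ k → i ≠ j → γ i ≠ γ j)
    (hwalk : ∀ i < k, H.Adj (γ i) (γ (i + 1)))
    (hclose : H.Adj (γ k) (γ 0))
    (ωs ωt : V)
    (hωs : H.Adj (γ 0) ωs) (hωs1 : ωs ≠ γ 1)
    (hωt : H.Adj (γ 0) ωt) (hωt1 : ωt ≠ γ k) :
    ¬∃ σ : ℕ → V,
      (∀ i < k + 1, H.Adj (σ i) (σ (i + 1))) ∧
      (∀ i, 1 ≤ i → i ≤ k → H.Adj (σ i) (γ i)) ∧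
      σ 0 = ωs ∧ σ (k + 1) = ωt := by
  rintro ⟨σ, hσ, hpin, rfl, rfl⟩
  have hH : H.SquareFree := hsf
  have hstart : σ 1 = γ 0 :=
    hH.eq_of_ne (hσ 0 (by omega)) (hpin 1 le_rfl (by omega)) (hwalk 0 (by omega)).symm hωs
      hωs1
  have hend : σ k = γ 0 :=
    hH.eq_of_ne (hσ k (by omega)).symm (hpin k (by omega) le_rfl) hclose hωt hωt1
  have hlag : σ k = γ (k - 1) := by
    simpa [Nat.sub_add_cancel (by omega : 1 ≤ k)] using
      hH.lag_of_pinned_walk hwalk (fun i hi => hdist i (i + 2) (by omega) hi (by omega))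
        (fun i hi => hσ i (by omega)) hpin hstart (k - 1) (by omega)
  exact hdist (k - 1) 0 (by omega) (by omega) (by omega) (hlag.symm.trans hend)

/-- For the edge gadget built on a cycle `θ γ₁ … γ_k θ` (length ≥ 3, `θ = γ 0`) in a
square-free graph, there is no homomorphism sending `s` to `ω_s ∈ N(θ) \ {γ₁}` and `t` to
`ω_t ∈ N(θ) \ {γ_k}`. -/
theorem stmt17 {V : Type*} [Fintype V]
    (H : SimpleGraph V)
    (hsf : ∀ a b c d : V, a ≠ b → b ≠ c → c ≠ d → d ≠ a → a ≠ c → b ≠ d →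
      ¬(H.Adj a b ∧ H.Adj b c ∧ H.Adj c d ∧ H.Adj d a))
    (k : ℕ) (hk : 2 ≤ k)
    (γ : ℕ → V)
    (hdist : ∀ i j, i ≤ k → j ≤ k → i ≠ j → γ i ≠ γ j)
    (hwalk : ∀ i < k, H.Adj (γ i) (γ (i + 1)))
    (hclose : H.Adj (γ k) (γ 0))
    (ωs ωt : V)
    (hωs : H.Adj (γ 0) ωs) (hωs1 : ωs ≠ γ 1)
    (hωt : H.Adj (γ 0) ωt) (hωt1 : ωt ≠ γ k) :
    ¬∃ σ : ℕ → V,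
      (∀ i < k + 1, H.Adj (σ i) (σ (i + 1))) ∧
      (∀ i, 1 ≤ i → i ≤ k → H.Adj (σ i) (γ i)) ∧
      σ 0 = ωs ∧ σ (k + 1) = ωt :=
  stmt17_general H hsf k hk γ hdist hwalk hclose ωs ωt hωs hωs1 hωt hωt1
end
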